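/- Let Θ be a symmetric positive definite p×p real matrix with Σ = Θ^{-1}. Suppose Θ_{1,j} = 0 for all j with d < j ≤ p (for some 1 ≤ d < p). Then the (1,1) entry of the inverse of the top-left d×d block of Σ equals Θ_{1,1}. -/

import Mathlib

open Matrix

/-
Let `S = Σ_d` be the leading block of `Σ = Θ⁻¹` and `r` the first row of `Θ`, cut down to its
first `d` entries. Since `r` vanishes beyond `d`, `r S` is the restriction of
`(first row of Θ) · Θ⁻¹ = e₁ᵀ`, so `r = e₁ᵀ S⁻¹` is the first row of `S⁻¹`; reading off its first
entry gives `(S⁻¹)₁₁ = Θ₁₁`. The block `S` is invertible because `Σ` is positive definite.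
-/

namespace Matrix

variable {l m n o R : Type*} [Fintype m] [Fintype n] [CommRing R]

theorem vecMul_submatrix_of_forall_notMem_range (A : Matrix n l R) {e : m → n}
    (he : Function.Injective e) (f : o → l) {v : n → R} (hv : ∀ i ∉ Set.range e, v i = 0) :
    (v ∘ e) ᵥ* A.submatrix e f = (v ᵥ* A) ∘ f := by
  ext j
  exact Fintype.sum_of_injective e he _ _ (fun i hi => by simp [hv i hi]) fun _ => rfl

theorem row_inv_submatrix_inv_eq_of_forall_notMem_range [DecidableEq m] [DecidableEq n]
    {A : Matrix n n R} (hA : IsUnit A.det) {e : m → n} (he : Function.Injective e)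
    (hS : IsUnit (A⁻¹.submatrix e e).det) (k : m) (hrow : ∀ j ∉ Set.range e, A (e k) j = 0) :
    (A⁻¹.submatrix e e)⁻¹.row k = A.row (e k) ∘ e := by
  have hr : (A.row (e k) ∘ e) ᵥ* A⁻¹.submatrix e e = Pi.single k 1 := by
    rw [vecMul_submatrix_of_forall_notMem_range (v := A.row (e k)) _ he _ hrow,
      ← single_one_vecMul, vecMul_vecMul, mul_nonsing_inv _ hA, vecMul_one]
    ext j
    simp [Pi.single_apply, he.eq_iff]
  rw [← single_one_vecMul, ← hr, vecMul_vecMul, mul_nonsing_inv _ hS, vecMul_one]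

end Matrix

theorem inv_of_cov_block_entry_eq_precision_entry_general
    (p d : ℕ) (hd : 0 < d) (hdp : d < p)
    (Θ : Matrix (Fin p) (Fin p) ℝ) (hpd : Θ.PosDef)
    (hzero : ∀ j : Fin p, d ≤ (j : ℕ) → Θ ⟨0, hd.trans hdp⟩ j = 0) :
    (((Θ⁻¹).submatrix (Fin.castLE hdp.le) (Fin.castLE hdp.le))⁻¹) ⟨0, hd⟩ ⟨0, hd⟩
      = Θ ⟨0, hd.trans hdp⟩ ⟨0, hd.trans hdp⟩ := by
  have hinj := Fin.castLE_injective hdp.le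
  have hS := (hpd.inv.submatrix hinj).det_pos.ne'.isUnit
  have hrow : ∀ j ∉ Set.range (Fin.castLE hdp.le), Θ (Fin.castLE hdp.le ⟨0, hd⟩) j = 0 :=
    fun j hj => hzero j (by simpa [Fin.range_castLE] using hj)
  have hΘ := hpd.det_pos.ne'.isUnit
  exact congrFun (row_inv_submatrix_inv_eq_of_forall_notMem_range hΘ hinj hS _ hrow) ⟨0, hd⟩

/-- Let `Θ` be a symmetric positive definite `p×p` matrix with `Σ = Θ⁻¹`.
If `Θ_{1,j} = 0` for all `j` with `d < j ≤ p` (0-based: all column indices `≥ d`), then the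
(1,1) entry of the inverse of the top-left `d×d` block of `Σ` equals `Θ_{1,1}`. -/
theorem inv_of_cov_block_entry_eq_precision_entry
    (p d : ℕ) (hd : 0 < d) (hdp : d < p)
    (Θ : Matrix (Fin p) (Fin p) ℝ) (hsym : Θ.IsSymm) (hpd : Θ.PosDef)
    (hzero : ∀ j : Fin p, d ≤ (j : ℕ) → Θ ⟨0, hd.trans hdp⟩ j = 0) :
    (((Θ⁻¹).submatrix (Fin.castLE hdp.le) (Fin.castLE hdp.le))⁻¹) ⟨0, hd⟩ ⟨0, hd⟩
      = Θ ⟨0, hd.trans hdp⟩ ⟨0, hd.trans hdp⟩ :=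
  inv_of_cov_block_entry_eq_precision_entry_general p d hd hdp Θ hpd hzero
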